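/- Let D be an (extremal epi, mono) category. Then there is a faithful reduction functor R : PD → QD, sending a projectively filtered object (X,P) to (X, Q) where Q is the saturation of the class of extremal epimorphism parts of (extremal epi, mono)-factorisations of the elements of P, such that the composition R ∘ j equals the identity functor on QD, where j : QD → PD is the inclusion, and R is right adjoint to j. -/

import Mathlib

open CategoryTheory CategoryTheory.Limits

universe w v u v₂ u₂

namespace FilteredCats

variable {D : Type u} [Category.{v} D]

/-- The class of morphisms of `D` with source `X`. -/
def MorFrom (X : D) : Type (max u v) := Σ Y : D, X ⟶ Y

/-- `Dom δ₁ δ₂` means `δ₁ ≥ δ₂`: there is `h` with `h ∘ δ₁ = δ₂`. -/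
def Dom {X : D} (δ₁ δ₂ : MorFrom X) : Prop :=
  ∃ h : δ₁.1 ⟶ δ₂.1, δ₁.2 ≫ h = δ₂.2

/-- A projective filtration on `X`: a nonempty, directed, saturated class of
morphisms with source `X`. -/
structure ProjFilt (X : D) where
  carrier : Set (MorFrom X)
  nonempty' : carrier.Nonempty
  directed' : ∀ δ₁ ∈ carrier, ∀ δ₂ ∈ carrier, ∃ δ ∈ carrier, Dom δ δ₁ ∧ Dom δ δ₂
  saturated' : ∀ δ₁ ∈ carrier, ∀ δ₂, Dom δ₁ δ₂ → δ₂ ∈ carrier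

/-- The pull back of a set of morphisms with source `X` along `f : X' ⟶ X`. -/
def pullSet {X' X : D} (f : X' ⟶ X) (S : Set (MorFrom X)) : Set (MorFrom X') :=
  {δ' | ∃ δ ∈ S, δ' = ⟨δ.1, f ≫ δ.2⟩}

/-- The pull back of a projective filtration along `f : X' ⟶ X`. -/
def ProjFilt.pull {X' X : D} (f : X' ⟶ X) (P : ProjFilt X) : ProjFilt X' where
  carrier := pullSet f P.carrier
  nonempty' := by
    obtain ⟨δ, hδ⟩ := P.nonempty'
    exact ⟨⟨δ.1, f ≫ δ.2⟩, δ, hδ, rfl⟩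
  directed' := by
    rintro _ ⟨δ₁, h₁, rfl⟩ _ ⟨δ₂, h₂, rfl⟩
    obtain ⟨δ, hδ, ⟨g₁, hg₁⟩, ⟨g₂, hg₂⟩⟩ := P.directed' δ₁ h₁ δ₂ h₂
    exact ⟨⟨δ.1, f ≫ δ.2⟩, ⟨δ, hδ, rfl⟩,
      ⟨g₁, by simp [hg₁]⟩, ⟨g₂, by simp [hg₂]⟩⟩
  saturated' := by
    rintro _ ⟨δ, hδ, rfl⟩ δ₂ ⟨h, hh⟩
    refine ⟨⟨δ₂.1, δ.2 ≫ h⟩, P.saturated' δ hδ _ ⟨h, rfl⟩, ?_⟩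
    obtain ⟨Y₂, g₂⟩ := δ₂
    have hg : g₂ = f ≫ (δ.2 ≫ h) := by simpa using hh.symm
    exact Sigma.ext rfl (heq_of_eq hg)

/-- A projectively filtered object of `D`. -/
structure PObj (D : Type u) [Category.{v} D] where
  base : D
  filt : ProjFilt base

/-- A morphism of projectively filtered objects: a morphism of the underlying
objects such that the pull back of the target filtration is contained in the
source filtration. -/
structure PHom (A B : PObj D) : Type v where
  toHom : A.base ⟶ B.base
  mem : ∀ δ ∈ B.filt.carrier, (⟨δ.1, toHom ≫ δ.2⟩ : MorFrom A.base) ∈ A.filt.carrier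

theorem PHom.ext' {A B : PObj D} {f g : PHom A B} (h : f.toHom = g.toHom) : f = g := by
  cases f; cases g; cases h; rfl

instance : Category.{v} (PObj D) where
  Hom := PHom
  id A := ⟨𝟙 A.base, fun δ hδ => by rw [Category.id_comp]; exact hδ⟩
  comp {A B C} f g := ⟨f.toHom ≫ g.toHom, fun δ hδ => by
    have h1 := g.mem δ hδ
    have h2 := f.mem _ h1
    simpa using h2⟩
  id_comp f := PHom.ext' (Category.id_comp _)
  comp_id f := PHom.ext' (Category.comp_id _)
  assoc f g h := PHom.ext' (Category.assoc _ _ _)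

@[simp] theorem PObj.id_toHom (A : PObj D) : PHom.toHom (𝟙 A) = 𝟙 A.base := rfl
@[simp] theorem PObj.comp_toHom {A B C : PObj D} (f : A ⟶ B) (g : B ⟶ C) :
    PHom.toHom (f ≫ g) = PHom.toHom f ≫ PHom.toHom g := rfl

/-- The forgetful functor `PD → D`. -/
def Pforget (D : Type u) [Category.{v} D] : PObj D ⥤ D where
  obj A := A.base
  map f := PHom.toHom f

/-- The discrete filtration functor `D → PD`, `X ↦ (X, M(X))`. -/
def Pdiscrete (D : Type u) [Category.{v} D] : D ⥤ PObj D where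
  obj X :=
    { base := X
      filt :=
        { carrier := Set.univ
          nonempty' := ⟨⟨X, 𝟙 X⟩, trivial⟩
          directed' := fun δ₁ _ δ₂ _ =>
            ⟨⟨X, 𝟙 X⟩, trivial, ⟨δ₁.2, Category.id_comp _⟩, ⟨δ₂.2, Category.id_comp _⟩⟩
          saturated' := fun _ _ _ _ => trivial } }
  map f := ⟨f, fun _ _ => trivial⟩

/-- The functor `PD → PE` induced by a functor `G : D → E`. -/
def Pfunctor {E : Type u₂} [Category.{v₂} E] (G : D ⥤ E) : PObj D ⥤ PObj E where
  obj A :=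
    { base := G.obj A.base
      filt :=
        { carrier := {δ' | ∃ δ ∈ A.filt.carrier,
            Dom (⟨G.obj δ.1, G.map δ.2⟩ : MorFrom (G.obj A.base)) δ'}
          nonempty' := by
            obtain ⟨δ, hδ⟩ := A.filt.nonempty'
            exact ⟨⟨G.obj δ.1, G.map δ.2⟩, δ, hδ, ⟨𝟙 _, Category.comp_id _⟩⟩
          directed' := by
            rintro δ'₁ ⟨δ₁, h₁, g₁, hg₁⟩ δ'₂ ⟨δ₂, h₂, g₂, hg₂⟩
            obtain ⟨δ, hδ, ⟨k₁, hk₁⟩, ⟨k₂, hk₂⟩⟩ := A.filt.directed' δ₁ h₁ δ₂ h₂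
            refine ⟨⟨G.obj δ.1, G.map δ.2⟩, ⟨δ, hδ, ⟨𝟙 _, Category.comp_id _⟩⟩,
              ⟨G.map k₁ ≫ g₁, ?_⟩, ⟨G.map k₂ ≫ g₂, ?_⟩⟩
            · rw [← Category.assoc, ← G.map_comp, hk₁, hg₁]
            · rw [← Category.assoc, ← G.map_comp, hk₂, hg₂]
          saturated' := by
            rintro δ'₁ ⟨δ, hδ, g, hg⟩ δ'₂ ⟨h, hh⟩
            exact ⟨δ, hδ, ⟨g ≫ h, by rw [← Category.assoc, hg, hh]⟩⟩ } }
  map {A B} f :=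
    ⟨G.map (PHom.toHom f), by
      rintro δ' ⟨δ, hδ, g, hg⟩
      exact ⟨⟨δ.1, PHom.toHom f ≫ δ.2⟩, f.mem δ hδ,
        ⟨g, by rw [← hg, ← Category.assoc, ← G.map_comp]⟩⟩⟩
  map_id A := PHom.ext' (G.map_id _)
  map_comp f g := PHom.ext' (G.map_comp _ _)

/-- An extremal epimorphism: an epimorphism such that in any factorisation
through a monomorphism, the monomorphism is an isomorphism. -/
def ExtremalEpi {C : Type u₂} [Category.{v₂} C] {X Y : C} (e : X ⟶ Y) : Prop :=
  Epi e ∧ ∀ ⦃Z : C⦄ (g : X ⟶ Z) (m : Z ⟶ Y), Mono m → g ≫ m = e → IsIso m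

/-- An (extremal epi, mono) category: every morphism factors as an extremal
epimorphism followed by a monomorphism and such factorisations have the
diagonal fill-in property. -/
structure EMCat (C : Type u₂) [Category.{v₂} C] : Prop where
  fact : ∀ {X Y : C} (f : X ⟶ Y), ∃ (Z : C) (e : X ⟶ Z) (m : Z ⟶ Y),
    ExtremalEpi e ∧ Mono m ∧ e ≫ m = f
  diag : ∀ {A B Z X : C} (e : A ⟶ B) (m : Z ⟶ X) (g : A ⟶ Z) (h : B ⟶ X),
    ExtremalEpi e → Mono m → g ≫ m = e ≫ h → ∃ d : B ⟶ Z, e ≫ d = g ∧ d ≫ m = h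

/-- A projective filtration is reduced if it has an initial subclass of
extremal epimorphisms. -/
def ProjFilt.Reduced {X : D} (P : ProjFilt X) : Prop :=
  ∀ δ ∈ P.carrier, ∃ ε ∈ P.carrier, ExtremalEpi ε.2 ∧ Dom ε δ

/-- The category of reduced projectively filtered objects of `D`. -/
def QObj (D : Type u) [Category.{v} D] := ObjectProperty.FullSubcategory (fun A : PObj D => A.filt.Reduced)

instance : Category.{v} (QObj D) := ObjectProperty.FullSubcategory.category _

/-- The inclusion functor `QD → PD`. -/
def qpInclusion (D : Type u) [Category.{v} D] : QObj D ⥤ PObj D :=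
  ObjectProperty.ι _

/-- A category is extremally co-well-powered if every object has, up to
isomorphism, only a (small) set of extremal epimorphisms out of it. -/
def ECWP (C : Type u₂) [Category.{v₂} C] : Prop :=
  ∀ X : C, ∃ (ι : Type v₂) (Y : ι → C) (e : ∀ i, X ⟶ Y i),
    (∀ i, ExtremalEpi (e i)) ∧
    ∀ ⦃Z : C⦄ (f : X ⟶ Z), ExtremalEpi f → ∃ (i : ι) (φ : Y i ≅ Z), e i ≫ φ.hom = f

/-- The category `(P, D)` associated to a projective filtration: objects are the
elements of `P`, morphisms `δ₁ → δ₂` are morphisms `g` of `D` with `g ∘ δ₁ = δ₂`. -/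
def FiltCat {X : D} (P : ProjFilt X) : Type (max u v) := {δ : MorFrom X // δ ∈ P.carrier}

instance {X : D} (P : ProjFilt X) : Category.{v} (FiltCat P) where
  Hom δ₁ δ₂ := {g : δ₁.1.1 ⟶ δ₂.1.1 // δ₁.1.2 ≫ g = δ₂.1.2}
  id δ := ⟨𝟙 _, Category.comp_id _⟩
  comp f g := ⟨f.1 ≫ g.1, by rw [← Category.assoc, f.2, g.2]⟩
  id_comp f := Subtype.ext (Category.id_comp _)
  comp_id f := Subtype.ext (Category.comp_id _)
  assoc f g h := Subtype.ext (Category.assoc _ _ _)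

/-- The functor `(P, D) → D` sending an element of the filtration to its target. -/
def FiltDiagram {X : D} (P : ProjFilt X) : FiltCat P ⥤ D where
  obj δ := δ.1.1
  map g := g.1

/-- The canonical cone on the diagram of a projective filtration, with apex the
underlying object. -/
def filtCone {X : D} (P : ProjFilt X) : Limits.Cone (FiltDiagram P) where
  pt := X
  π :=
    { app := fun δ => δ.1.2
      naturality := fun δ₁ δ₂ g => by
        have := g.2
        dsimp [FiltDiagram] at *
        simp [this] }

/-- A reduced projective filtration is an iso-filtration if the canonical cone
on its diagram is a limit cone, i.e. the limit exists and the canonical morphism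
from the underlying object to it is an isomorphism. -/
def IsoFilt {X : D} (P : ProjFilt X) : Prop :=
  Nonempty (Limits.IsLimit (filtCone P))

/-- The category of iso-filtered objects of `D`. -/
def KObj (D : Type u) [Category.{v} D] :=
  ObjectProperty.FullSubcategory (fun A : QObj D => IsoFilt A.obj.filt)

instance : Category.{v} (KObj D) := ObjectProperty.FullSubcategory.category _

/-- The inclusion functor `KD → QD`. -/
def kqInclusion (D : Type u) [Category.{v} D] : KObj D ⥤ QObj D :=
  ObjectProperty.ι _

/-- The forgetful functor `KD → D`. -/
def Kforget (D : Type u) [Category.{v} D] : KObj D ⥤ D :=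
  kqInclusion D ⋙ qpInclusion D ⋙ Pforget D

/-- The smallest projective filtration containing a class of morphisms
(as a class). -/
def genSet {X : D} (S : Set (MorFrom X)) : Set (MorFrom X) :=
  {δ | ∀ P : ProjFilt X, S ⊆ P.carrier → δ ∈ P.carrier}

/-- The reduction of a class of morphisms: the saturation of the class of
extremal epimorphism parts of (extremal epi, mono)-factorisations of its
elements. -/
def redSet {X : D} (S : Set (MorFrom X)) : Set (MorFrom X) :=
  {δ | ∃ ε : MorFrom X, ExtremalEpi ε.2 ∧
    (∃ δ' ∈ S, ∃ m : ε.1 ⟶ δ'.1, Mono m ∧ ε.2 ≫ m = δ'.2) ∧ Dom ε δ}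

/-- The push forward of a filtration class along `f` (single morphism case). -/
def pushSet {X Y : D} (f : X ⟶ Y) (S : Set (MorFrom X)) : Set (MorFrom Y) :=
  {g | (⟨g.1, f ≫ g.2⟩ : MorFrom X) ∈ S}

/-- The discrete filtration on an object, as an iso-filtered object. -/
def kDiscreteObj (X : D) : KObj D where
  obj :=
    { obj := (Pdiscrete D).obj X
      property := fun δ _ => ⟨⟨X, 𝟙 X⟩, trivial,
        ⟨(inferInstance : Epi (𝟙 X)), fun _ g m hm hgm => by
          haveI : IsSplitEpi m := ⟨⟨⟨g, hgm⟩⟩⟩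
          exact isIso_of_mono_of_isSplitEpi m⟩,
        ⟨δ.2, Category.id_comp _⟩⟩ }
  property := ⟨{
    lift := fun c => c.π.app ⟨⟨X, 𝟙 X⟩, trivial⟩
    fac := fun c j => by
      have h := c.π.naturality (X := ⟨⟨X, 𝟙 X⟩, trivial⟩) (Y := j)
        ⟨j.1.2, Category.id_comp _⟩
      dsimp [FiltDiagram, filtCone] at h ⊢
      exact h.symm.trans (Category.id_comp _)
    uniq := fun c m hm => by
      have h := hm ⟨⟨X, 𝟙 X⟩, trivial⟩
      rw [← Category.comp_id m]
      exact h }⟩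

/-- The discrete filtration functor `D → KD`. -/
def kDiscrete (D : Type u) [Category.{v} D] : D ⥤ KObj D where
  obj X := kDiscreteObj X
  map f := ⟨⟨⟨f, fun _ _ => trivial⟩⟩⟩
  map_id _ := rfl
  map_comp _ _ := rfl

/-- The morphism in `KD` from an iso-filtered object to the discrete object on
the target of an element of its filtration. -/
def kToDiscrete {A : KObj D} (δ : MorFrom A.obj.obj.base)
    (hδ : δ ∈ A.obj.obj.filt.carrier) : A ⟶ kDiscreteObj δ.1 :=
  ObjectProperty.homMk (ObjectProperty.homMk (show PHom A.obj.obj ((kDiscreteObj δ.1).obj.obj) from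
    ⟨δ.2, fun γ _ => A.obj.obj.filt.saturated' δ hδ _ ⟨γ.2, rfl⟩⟩))

/-- The natural transformation `P(G) → P(H)` induced by `ν : G → H`. -/
def Pnat {E : Type u₂} [Category.{v₂} E] {G H : D ⥤ E} (ν : G ⟶ H) :
    Pfunctor G ⟶ Pfunctor H where
  app A :=
    ⟨ν.app A.base, by
      rintro δ' ⟨δ, hδ, g, hg⟩
      exact ⟨δ, hδ, ⟨ν.app δ.1 ≫ g, by
        rw [← Category.assoc, ν.naturality, Category.assoc, hg]; rfl⟩⟩⟩
  naturality {A B} f := PHom.ext' (ν.naturality (PHom.toHom f))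

/-! The reduction of `P` keeps, for each `δ ∈ P`, the extremal-epi part `e` of `δ = m ∘ e`.
Each property of the reduction is one application of the diagonal fill-in: directedness (a common
refinement `δ` of `δ₁, δ₂` has an extremal-epi part through which those of `δ₁, δ₂` factor),
functoriality (pulling back along `f` refines `e ∘ f` to the extremal-epi part of `e ∘ f`),
and the adjunction (if `f : (Y, Q) → (X, P)` with `Q` reduced, then `δ ∘ f ∈ Q` dominates
an extremal epi of `Q`, which factors through `e ∘ f`, so `e ∘ f ∈ Q`). -/

theorem ProjFilt.ext {X : D} {P Q : ProjFilt X} (h : P.carrier = Q.carrier) : P = Q := by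
  cases P; cases Q; cases h; rfl

theorem subset_redSet (hEM : EMCat D) {X : D} (S : Set (MorFrom X)) : S ⊆ redSet S := by
  intro δ hδ
  obtain ⟨Z, e, m, he, hm, hem⟩ := hEM.fact δ.2
  exact ⟨⟨Z, e⟩, he, ⟨δ, hδ, m, hm, hem⟩, ⟨m, hem⟩⟩

theorem redSet_saturated {X : D} (S : Set (MorFrom X)) :
    ∀ δ₁ ∈ redSet S, ∀ δ₂, Dom δ₁ δ₂ → δ₂ ∈ redSet S := by
  rintro δ₁ ⟨ε, he, hfac, h, hh⟩ δ₂ ⟨g, hg⟩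
  exact ⟨ε, he, hfac, ⟨h ≫ g, by rw [← Category.assoc, hh, hg]⟩⟩

theorem redSet_directed (hEM : EMCat D) {X : D} (P : ProjFilt X) :
    ∀ δ₁ ∈ redSet P.carrier, ∀ δ₂ ∈ redSet P.carrier,
      ∃ δ ∈ redSet P.carrier, Dom δ δ₁ ∧ Dom δ δ₂ := by
  rintro δ₁ ⟨ε₁, -, ⟨δ'₁, hδ'₁, m₁, hm₁, hem₁⟩, h₁, hh₁⟩
    δ₂ ⟨ε₂, -, ⟨δ'₂, hδ'₂, m₂, hm₂, hem₂⟩, h₂, hh₂⟩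
  obtain ⟨δ, hδ, ⟨k₁, hk₁⟩, ⟨k₂, hk₂⟩⟩ := P.directed' δ'₁ hδ'₁ δ'₂ hδ'₂
  obtain ⟨Z, e, m, he, hm, hem⟩ := hEM.fact δ.2
  obtain ⟨d₁, hd₁, -⟩ := hEM.diag e m₁ ε₁.2 (m ≫ k₁) he hm₁
    (by rw [hem₁, ← hk₁, ← hem, Category.assoc])
  obtain ⟨d₂, hd₂, -⟩ := hEM.diag e m₂ ε₂.2 (m ≫ k₂) he hm₂
    (by rw [hem₂, ← hk₂, ← hem, Category.assoc])
  exact ⟨⟨Z, e⟩, ⟨⟨Z, e⟩, he, ⟨δ, hδ, m, hm, hem⟩, ⟨𝟙 Z, Category.comp_id _⟩⟩,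
    ⟨d₁ ≫ h₁, by rw [← Category.assoc, hd₁, hh₁]⟩,
    ⟨d₂ ≫ h₂, by rw [← Category.assoc, hd₂, hh₂]⟩⟩

def ProjFilt.red (hEM : EMCat D) {X : D} (P : ProjFilt X) : ProjFilt X where
  carrier := redSet P.carrier
  nonempty' := P.nonempty'.mono (subset_redSet hEM P.carrier)
  directed' := redSet_directed hEM P
  saturated' := redSet_saturated P.carrier

theorem ProjFilt.red_reduced (hEM : EMCat D) {X : D} (P : ProjFilt X) :
    (P.red hEM).Reduced := by
  rintro δ ⟨ε, he, hfac, hd⟩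
  exact ⟨ε, ⟨ε, he, hfac, ⟨𝟙 _, Category.comp_id _⟩⟩, he, hd⟩

theorem comp_mem_redSet_of_comp_mem (hEM : EMCat D) {X' X : D} (f : X' ⟶ X)
    {S : Set (MorFrom X)} {T : Set (MorFrom X')}
    (hf : ∀ δ ∈ S, (⟨δ.1, f ≫ δ.2⟩ : MorFrom X') ∈ T) :
    ∀ δ ∈ redSet S, (⟨δ.1, f ≫ δ.2⟩ : MorFrom X') ∈ redSet T := by
  rintro δ ⟨ε, -, ⟨δ', hδ', m, hm, hem⟩, h, hh⟩
  obtain ⟨Z, e, m', he', hm', hem'⟩ := hEM.fact (f ≫ ε.2)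
  refine ⟨⟨Z, e⟩, he', ⟨⟨δ'.1, f ≫ δ'.2⟩, hf δ' hδ', m' ≫ m, mono_comp' hm' hm, ?_⟩,
    ⟨m' ≫ h, ?_⟩⟩
  · rw [← Category.assoc, hem', Category.assoc, hem]
  · rw [← Category.assoc, hem', Category.assoc, hh]

theorem ProjFilt.Reduced.comp_mem_of_mem_redSet (hEM : EMCat D) {X' X : D} {Q : ProjFilt X'}
    (hQ : Q.Reduced) (f : X' ⟶ X) {S : Set (MorFrom X)}
    (hf : ∀ δ ∈ S, (⟨δ.1, f ≫ δ.2⟩ : MorFrom X') ∈ Q.carrier) :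
    ∀ δ ∈ redSet S, (⟨δ.1, f ≫ δ.2⟩ : MorFrom X') ∈ Q.carrier := by
  rintro δ ⟨ε, -, ⟨δ', hδ', m, hm, hem⟩, h, hh⟩
  obtain ⟨εQ, hεQ, heQ, k, hk⟩ := hQ _ (hf δ' hδ')
  obtain ⟨d, hd, -⟩ := hEM.diag εQ.2 m (f ≫ ε.2) k heQ hm (by rw [Category.assoc, hem, hk])
  exact Q.saturated' εQ hεQ _ ⟨d ≫ h, by rw [← Category.assoc, hd, Category.assoc, hh]⟩

theorem ProjFilt.red_eq_self (hEM : EMCat D) {X : D} {P : ProjFilt X} (hP : P.Reduced) :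
    P.red hEM = P := by
  refine ProjFilt.ext (Set.Subset.antisymm (fun δ hδ => ?_) (subset_redSet hEM P.carrier))
  have h := hP.comp_mem_of_mem_redSet hEM (𝟙 X) (fun δ hδ => by rwa [Category.id_comp]) δ hδ
  rwa [Category.id_comp] at h

def reduction (hEM : EMCat D) : PObj D ⥤ QObj D where
  obj A := ⟨⟨A.base, A.filt.red hEM⟩, A.filt.red_reduced hEM⟩
  map f := ObjectProperty.homMk ⟨f.toHom, comp_mem_redSet_of_comp_mem hEM f.toHom f.mem⟩

instance (hEM : EMCat D) : (reduction hEM).Faithful where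
  map_injective h := PHom.ext' (congrArg (fun g => g.hom.toHom) h)

theorem QObj.eqToHom_toHom {A B : QObj D} (h : A = B) :
    (eqToHom h).hom.toHom = eqToHom (congrArg (fun C : QObj D => C.obj.base) h) := by
  subst h; rfl

theorem inclusion_comp_reduction (hEM : EMCat D) : qpInclusion D ⋙ reduction hEM = 𝟭 _ := by
  have hobj : ∀ B : QObj D, (qpInclusion D ⋙ reduction hEM).obj B = B := by
    rintro ⟨⟨X, P⟩, hP⟩
    change (⟨⟨X, P.red hEM⟩, _⟩ : QObj D) = ⟨⟨X, P⟩, hP⟩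
    congr 2
    exact ProjFilt.red_eq_self hEM hP
  refine CategoryTheory.Functor.ext hobj fun A B f => ObjectProperty.hom_ext _ (PHom.ext' ?_)
  change f.hom.toHom = (eqToHom (hobj A)).hom.toHom ≫ f.hom.toHom ≫ (eqToHom (hobj B).symm).hom.toHom
  rw [QObj.eqToHom_toHom, QObj.eqToHom_toHom]
  exact ((Category.id_comp _).trans (Category.comp_id _)).symm

def inclusionAdjReduction (hEM : EMCat D) : qpInclusion D ⊣ reduction hEM :=
  Adjunction.mkOfHomEquiv
    { homEquiv := fun B _ =>
        { toFun := fun f => ObjectProperty.homMk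
            ⟨f.toHom, B.property.comp_mem_of_mem_redSet hEM f.toHom f.mem⟩
          invFun := fun g => ⟨g.hom.toHom, fun δ hδ => g.hom.mem δ (subset_redSet hEM _ hδ)⟩
          left_inv := fun _ => rfl
          right_inv := fun _ => rfl }
      homEquiv_naturality_left_symm := fun _ _ => rfl
      homEquiv_naturality_right := fun _ _ => rfl }

/-- for an (extremal epi, mono) category `D` there is a faithful
reduction functor `R : PD → QD`, sending `(X, P)` to `X` equipped with the
saturation of the class of extremal epimorphism parts of (extremal epi, mono)-
factorisations of the elements of `P`, such that `R ∘ j = 1` on `QD` and `R` is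
right adjoint to the inclusion `j : QD → PD`. -/
theorem reduction_functor (hEM : EMCat D) :
    ∃ R : PObj D ⥤ QObj D,
      R.Faithful ∧
      qpInclusion D ⋙ R = 𝟭 (QObj D) ∧
      Nonempty (qpInclusion D ⊣ R) ∧
      ∀ A : PObj D, ∃ h : (R.obj A).obj.base = A.base,
        (R.obj A).obj.filt.carrier =
          {δ : MorFrom ((R.obj A).obj.base) |
            (⟨δ.1, eqToHom h.symm ≫ δ.2⟩ : MorFrom A.base) ∈ redSet A.filt.carrier} :=
  ⟨reduction hEM, inferInstance, inclusion_comp_reduction hEM, ⟨inclusionAdjReduction hEM⟩,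
    fun A => ⟨rfl, Set.ext fun δ => iff_of_eq (congrArg (· ∈ redSet A.filt.carrier)
      (Sigma.ext rfl (heq_of_eq (Category.id_comp δ.2).symm)))⟩⟩

end FilteredCats
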